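/- Let F and G be nonempty finite sets of affine functions from ℝ to ℝ, and let H = { f ∘ g : f ∈ F, g ∈ G }. Then the upper envelope H_↑ is piecewise linear with p(H_↑) ≤ 4·p(F_↑) + 2·p(G_↓) + 2·p(G_↑) pieces, where G_↓ is the pointwise minimum over G and F_↑, G_↑ are the pointwise maxima over F, G. -/

import Mathlib

/-- `f : ℝ → ℝ` is piecewise linear with at most `k` pieces: there are
breakpoints `c 0 ≤ c 1 ≤ … ≤ c (k-2)` such that on each of the `k` intervals
`(-∞, c 0], [c 0, c 1], …, [c (k-2), ∞)` the function `f` agrees with some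
affine function `x ↦ a * x + b`. -/
def PiecewiseAffineWith (f : ℝ → ℝ) (k : ℕ) : Prop :=
  0 < k ∧ ∃ c : Fin (k - 1) → ℝ, Monotone c ∧
    ∀ j : Fin k, ∃ a b : ℝ, ∀ y : ℝ,
      (∀ i : Fin (k - 1), (i : ℕ) < (j : ℕ) → c i ≤ y) →
      (∀ i : Fin (k - 1), (j : ℕ) ≤ (i : ℕ) → y ≤ c i) →
      f y = a * y + b

/-- `p(f)`: the least `k` such that `f` is piecewise linear with at most `k` pieces. -/
noncomputable def nPieces (f : ℝ → ℝ) : ℕ := sInf {k | PiecewiseAffineWith f k}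

/-!
Write `φ = F_↑`, `u = G_↑` and `l = G_↓`. Every affine `f` is monotone or antitone, so
`H_↑ = max (φ ∘ u) (φ ∘ l)`.

Since `u` is convex, `φ ∘ u` can only break at the breakpoints of `u` and at the two endpoints of
the sublevel interval `{u ≤ c}` for each breakpoint `c` of `φ`, so `p(φ ∘ u) ≤ 2 p(φ) + p(u)`;
likewise `φ ∘ l = (φ ∘ neg) ∘ (-l)` with `-l` convex gives `p(φ ∘ l) ≤ 2 p(φ) + p(l)`.

Finally `H_↑` is convex, and a line agreeing with a convex function on an interval lies below it.
Near every point `H_↑` agrees with one of the lines of `φ ∘ u` or of `φ ∘ l`, so `H_↑` is the upper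
envelope of at most `p(φ ∘ u) + p(φ ∘ l)` lines; an upper envelope of lines has at most one piece
per slope, because its slope increases from piece to piece.
-/

open Set Filter Topology

lemma Continuous.exists_eq_zero_of_add_mul_le {D : ℝ → ℝ} (hD : Continuous D) {δ : ℝ}
    (hδ : 0 < δ) (hgrow : ∀ x y, x ≤ y → D x + δ * (y - x) ≤ D y) : ∃ t, D t = 0 := by
  set r := |D 0| / δ
  have hr : δ * r = |D 0| := mul_div_cancel₀ _ hδ.ne'
  have hlo : D (-r) ≤ 0 := by
    have := hgrow (-r) 0 (neg_nonpos.2 (by positivity))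
    rw [zero_sub, neg_neg, hr] at this
    linarith [le_abs_self (D 0)]
  have hhi : 0 ≤ D r := by
    have := hgrow 0 r (by positivity)
    rw [sub_zero, hr] at this
    linarith [neg_abs_le (D 0)]
  exact intermediate_value_univ (-r) r hD ⟨hlo, hhi⟩

section LineSup

variable {ι : Type*} (S : Finset ι) (hS : S.Nonempty) (A B : ι → ℝ)

noncomputable def lineSup (x : ℝ) : ℝ :=
  S.sup' hS fun i => A i * x + B i

lemma exists_lineSup_eq (x : ℝ) :
    ∃ i ∈ S, lineSup S hS A B x = A i * x + B i :=
  Finset.exists_mem_eq_sup' hS _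

lemma continuous_lineSup : Continuous (lineSup S hS A B) :=
  Continuous.finset_sup'_apply (f := fun i x => A i * x + B i) hS fun _ _ => by fun_prop

variable {S hS A B}

lemma line_le_lineSup {i : ι} (hi : i ∈ S) (x : ℝ) : A i * x + B i ≤ lineSup S hS A B x :=
  Finset.le_sup' (fun i => A i * x + B i) hi

lemma lineSup_le {x c : ℝ} (h : ∀ i ∈ S, A i * x + B i ≤ c) : lineSup S hS A B x ≤ c :=
  Finset.sup'_le _ _ h

lemma mul_sub_le_lineSup_sub {i : ι} (hi : i ∈ S) {x : ℝ}
    (hx : lineSup S hS A B x = A i * x + B i) (y : ℝ) :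
    A i * (y - x) ≤ lineSup S hS A B y - lineSup S hS A B x := by
  have := line_le_lineSup (hS := hS) (A := A) (B := B) hi y
  rw [mul_sub]; linarith

lemma exists_lineSup_eq_of_le {U V : Finset ι} (hU : U.Nonempty) (hV : V.Nonempty) (hUS : U ⊆ S)
    (hSUV : ∀ i ∈ S, i ∈ U ∨ i ∈ V) {y : ℝ}
    (hle : lineSup V hV A B y ≤ lineSup U hU A B y) :
    ∃ i ∈ U, lineSup S hS A B y = A i * y + B i := by
  obtain ⟨j, hjU, hj⟩ := exists_lineSup_eq U hU A B y
  refine ⟨j, hjU, le_antisymm (lineSup_le fun k hk => hj ▸ ?_) (line_le_lineSup (hUS hjU) y)⟩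
  rcases hSUV k hk with hkU | hkV
  · exact line_le_lineSup hkU y
  · exact (line_le_lineSup hkV y).trans hle

lemma exists_lineSup_eq_mul_add {P : Set ℝ} {s : ℝ}
    (hge : ∀ y ∈ P, ∃ i ∈ S, s ≤ A i ∧ lineSup S hS A B y = A i * y + B i)
    (hle : ∀ y ∈ P, ∃ i ∈ S, A i ≤ s ∧ lineSup S hS A B y = A i * y + B i) :
    ∃ b, ∀ y ∈ P, lineSup S hS A B y = s * y + b := by
  have key : ∀ x ∈ P, ∀ y ∈ P, x ≤ y →
      lineSup S hS A B y - s * y = lineSup S hS A B x - s * x := by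
    intro x hx y hy hxy
    obtain ⟨i, hi, hsi, hix⟩ := hge x hx
    obtain ⟨j, hj, hjs, hjy⟩ := hle y hy
    have h₁ := mul_sub_le_lineSup_sub hi hix y
    have h₂ := mul_sub_le_lineSup_sub hj hjy x
    nlinarith [mul_le_mul_of_nonneg_right hsi (sub_nonneg.2 hxy),
      mul_le_mul_of_nonneg_right hjs (sub_nonneg.2 hxy)]
  rcases P.eq_empty_or_nonempty with rfl | ⟨y₀, hy₀⟩
  · exact ⟨0, fun y hy => hy.elim⟩
  refine ⟨lineSup S hS A B y₀ - s * y₀, fun y hy => ?_⟩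
  rcases le_total y₀ y with h | h
  · linarith [key y₀ hy₀ y hy h]
  · linarith [key y hy y₀ hy₀ h]

variable (S hS A B)

lemma convexOn_lineSup : ConvexOn ℝ univ (lineSup S hS A B) := by
  refine ⟨convex_univ, fun x _ y _ p q hp hq hpq => lineSup_le fun i hi => ?_⟩
  have hx := line_le_lineSup (hS := hS) (A := A) (B := B) hi x
  have hy := line_le_lineSup (hS := hS) (A := A) (B := B) hi y
  calc A i * (p • x + q • y) + B i = p * (A i * x + B i) + q * (A i * y + B i) := by
        simp only [smul_eq_mul]; linear_combination (-B i) * hpq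
    _ ≤ p • lineSup S hS A B x + q • lineSup S hS A B y := by
        simp only [smul_eq_mul]; gcongr

def IsCrossing (s t : ℝ) : Prop :=
  (∀ y ≤ t, ∃ i ∈ S, A i ≤ s ∧ lineSup S hS A B y = A i * y + B i) ∧
    ∀ y, t ≤ y → ∃ i ∈ S, s < A i ∧ lineSup S hS A B y = A i * y + B i

lemma exists_isCrossing (s : ℝ) (hlo : ∃ i ∈ S, A i ≤ s) (hhi : ∃ i ∈ S, s < A i) :
    ∃ t, IsCrossing S hS A B s t := by
  classical
  set U := S.filter (A · ≤ s)
  set V := S.filter (s < A ·)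
  have hU : U.Nonempty := let ⟨i, hi, his⟩ := hlo; ⟨i, Finset.mem_filter.2 ⟨hi, his⟩⟩
  have hV : V.Nonempty := let ⟨i, hi, his⟩ := hhi; ⟨i, Finset.mem_filter.2 ⟨hi, his⟩⟩
  have hSUV : ∀ i ∈ S, i ∈ U ∨ i ∈ V := fun i hi =>
    (le_or_gt (A i) s).imp (fun h => Finset.mem_filter.2 ⟨hi, h⟩)
      (fun h => Finset.mem_filter.2 ⟨hi, h⟩)
  have hμ : s < V.inf' hV A := (Finset.lt_inf'_iff hV).2 fun i hi => (Finset.mem_filter.1 hi).2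
  -- the crossing is where the envelope of the steeper lines overtakes that of the flatter ones
  set D := fun y => lineSup V hV A B y - lineSup U hU A B y
  have hgrow : ∀ x y, x ≤ y → D x + (V.inf' hV A - s) * (y - x) ≤ D y := by
    intro x y hxy
    obtain ⟨i, hiV, hix⟩ := exists_lineSup_eq V hV A B x
    obtain ⟨j, hjU, hjy⟩ := exists_lineSup_eq U hU A B y
    have h₁ := mul_sub_le_lineSup_sub hiV hix y
    have h₂ := mul_sub_le_lineSup_sub hjU hjy x
    nlinarith [mul_le_mul_of_nonneg_right (Finset.inf'_le A hiV) (sub_nonneg.2 hxy),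
      mul_le_mul_of_nonneg_right (Finset.mem_filter.1 hjU).2 (sub_nonneg.2 hxy)]
  obtain ⟨t, ht⟩ := ((continuous_lineSup V hV A B).sub
    (continuous_lineSup U hU A B)).exists_eq_zero_of_add_mul_le (sub_pos.2 hμ) hgrow
  have hDt : D t = 0 := ht
  refine ⟨t, fun y hy => ?_, fun y hy => ?_⟩
  · have := hgrow y t hy
    obtain ⟨i, hiU, hi⟩ := exists_lineSup_eq_of_le (hS := hS) (A := A) (B := B) (y := y) hU hV
      (Finset.filter_subset _ _) hSUV
      (by nlinarith [mul_nonneg (sub_pos.2 hμ).le (sub_nonneg.2 hy)])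
    exact ⟨i, Finset.filter_subset _ _ hiU, (Finset.mem_filter.1 hiU).2, hi⟩
  · have := hgrow t y hy
    obtain ⟨i, hiV, hi⟩ := exists_lineSup_eq_of_le (hS := hS) (A := A) (B := B) (y := y) hV hU
      (Finset.filter_subset _ _) (fun i hi => (hSUV i hi).symm)
      (by nlinarith [mul_nonneg (sub_pos.2 hμ).le (sub_nonneg.2 hy)])
    exact ⟨i, Finset.filter_subset _ _ hiV, (Finset.mem_filter.1 hiV).2, hi⟩

variable {S hS A B}

lemma IsCrossing.le {s s' t t' : ℝ} (ht : IsCrossing S hS A B s t)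
    (ht' : IsCrossing S hS A B s' t') (hss' : s ≤ s') : t ≤ t' := by
  by_contra! hlt
  obtain ⟨k, hk, hks, hkx⟩ := ht'.2 t' le_rfl
  obtain ⟨k', hk', hk's, hk'y⟩ := ht.1 t le_rfl
  have h₁ := mul_sub_le_lineSup_sub hk hkx t
  have h₂ := mul_sub_le_lineSup_sub hk' hk'y t'
  nlinarith [mul_pos (sub_pos.2 hlt) (show 0 < A k - A k' by linarith)]

lemma exists_lineSup_eq_on_piece {m : ℕ} {σ : Fin (m + 1) → ℝ} (hσ : StrictMono σ)
    (hσS : ∀ k ∈ S, A k ∈ range σ) {t : Fin m → ℝ}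
    (ht : ∀ i, IsCrossing S hS A B (σ i.castSucc) (t i)) (j : Fin (m + 1)) :
    ∃ b, ∀ y, (∀ i : Fin m, (i : ℕ) < j → t i ≤ y) →
      (∀ i : Fin m, (j : ℕ) ≤ i → y ≤ t i) → lineSup S hS A B y = σ j * y + b := by
  have hge : ∀ y, (∀ i : Fin m, (i : ℕ) < j → t i ≤ y) →
      ∃ k ∈ S, σ j ≤ A k ∧ lineSup S hS A B y = A k * y + B k := by
    intro y hy
    obtain ⟨k, hk, hkσ, hky⟩ : ∃ k ∈ S, (∀ i < j, σ i < A k) ∧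
        lineSup S hS A B y = A k * y + B k := by
      rcases j with ⟨_ | j, hj⟩
      · obtain ⟨k, hk, hky⟩ := exists_lineSup_eq S hS A B y
        exact ⟨k, hk, fun i hi => absurd hi (Fin.not_lt_zero _), hky⟩
      · obtain ⟨k, hk, hks, hky⟩ := (ht ⟨j, by omega⟩).2 y (hy _ (by simp))
        refine ⟨k, hk, fun i hi => (hσ.monotone ?_).trans_lt hks, hky⟩
        simp only [Fin.lt_def, Fin.le_def, Fin.val_castSucc] at hi ⊢; omega
    obtain ⟨i, hi⟩ := hσS k hk
    exact ⟨k, hk, hi ▸ hσ.monotone (not_lt.1 fun hij => (hkσ i hij).ne hi), hky⟩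
  have hle : ∀ y, (∀ i : Fin m, (j : ℕ) ≤ i → y ≤ t i) →
      ∃ k ∈ S, A k ≤ σ j ∧ lineSup S hS A B y = A k * y + B k := by
    intro y hy
    obtain ⟨k, hk, hkσ, hky⟩ : ∃ k ∈ S, (∀ i, j < i → A k < σ i) ∧
        lineSup S hS A B y = A k * y + B k := by
      by_cases hj : (j : ℕ) < m
      · obtain ⟨k, hk, hks, hky⟩ := (ht ⟨j, hj⟩).1 y (hy _ le_rfl)
        refine ⟨k, hk, fun i hi => hks.trans_lt (hσ ?_), hky⟩
        rw [Fin.lt_def] at hi ⊢; simpa using hi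
      · obtain ⟨k, hk, hky⟩ := exists_lineSup_eq S hS A B y
        exact ⟨k, hk, fun i hi => absurd (Fin.lt_def.1 hi) (by omega), hky⟩
    obtain ⟨i, hi⟩ := hσS k hk
    exact ⟨k, hk, hi ▸ hσ.monotone (not_lt.1 fun hji => (hkσ i hji).ne' hi), hky⟩
  obtain ⟨b, hb⟩ := exists_lineSup_eq_mul_add
    (P := {y | (∀ i : Fin m, (i : ℕ) < j → t i ≤ y) ∧
      ∀ i : Fin m, (j : ℕ) ≤ i → y ≤ t i})
    (fun y hy => hge y hy.1) (fun y hy => hle y hy.2)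
  exact ⟨b, fun y h₁ h₂ => hb y ⟨h₁, h₂⟩⟩

variable (S hS A B)

theorem piecewiseAffineWith_lineSup :
    PiecewiseAffineWith (lineSup S hS A B) (S.image A).card := by
  classical
  obtain ⟨m, hm⟩ : ∃ m, (S.image A).card = m + 1 :=
    ⟨_, (Nat.succ_pred_eq_of_pos (hS.image A).card_pos).symm⟩
  set σ := (S.image A).orderEmbOfFin hm
  have hσ : ∀ i, ∃ k ∈ S, A k = σ i := fun i =>
    Finset.mem_image.1 (Finset.orderEmbOfFin_mem _ hm i)
  have hσS : ∀ k ∈ S, A k ∈ range σ := fun k hk => by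
    rw [Finset.range_orderEmbOfFin]; exact Finset.mem_image_of_mem A hk
  choose t ht using fun i : Fin m => exists_isCrossing S hS A B (σ i.castSucc)
    (let ⟨k, hk, hkσ⟩ := hσ i.castSucc; ⟨k, hk, hkσ.le⟩)
    (let ⟨k, hk, hkσ⟩ := hσ i.succ; ⟨k, hk, hkσ ▸ σ.strictMono Fin.castSucc_lt_succ⟩)
  rw [hm]
  refine ⟨m.succ_pos, t, fun i i' hii' => (ht i).le (ht i') (σ.monotone
    (Fin.castSucc_le_castSucc_iff.2 hii')), fun j => ?_⟩
  obtain ⟨b, hb⟩ := exists_lineSup_eq_on_piece σ.strictMono hσS ht j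
  exact ⟨σ j, b, hb⟩

end LineSup

lemma line_coeffs_eq {a b a' b' p q : ℝ} (hpq : p ≠ q) (hp : a * p + b = a' * p + b')
    (hq : a * q + b = a' * q + b') : a = a' ∧ b = b' := by
  have ha : a = a' := mul_right_cancel₀ (sub_ne_zero.2 hpq) (by linear_combination hp - hq)
  subst ha
  exact ⟨rfl, by linarith⟩

lemma exists_affine_of_forall_Icc {f : ℝ → ℝ} {P : Set ℝ}
    (h : ∀ p ∈ P, ∀ q ∈ P, ∃ a b : ℝ, ∀ y ∈ Icc p q, f y = a * y + b) :
    ∃ a b : ℝ, ∀ y ∈ P, f y = a * y + b := by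
  by_cases hP : ∃ p ∈ P, ∃ q ∈ P, p < q
  · obtain ⟨p, hp, q, hq, hpq⟩ := hP
    obtain ⟨a, b, hab⟩ := h p hp q hq
    refine ⟨a, b, fun y hy => ?_⟩
    obtain ⟨a', b', hab'⟩ :=
      h (min p y) (min_rec' (· ∈ P) hp hy) (max q y) (max_rec' (· ∈ P) hq hy)
    have hsub : Icc p q ⊆ Icc (min p y) (max q y) :=
      Icc_subset_Icc (min_le_left _ _) (le_max_left _ _)
    have hpI := left_mem_Icc.2 hpq.le
    have hqI := right_mem_Icc.2 hpq.le
    obtain ⟨rfl, rfl⟩ := line_coeffs_eq hpq.ne ((hab' p (hsub hpI)).symm.trans (hab p hpI))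
      ((hab' q (hsub hqI)).symm.trans (hab q hqI))
    exact hab' y ⟨min_le_right _ _, le_max_right _ _⟩
  · push Not at hP
    rcases P.eq_empty_or_nonempty with rfl | ⟨p, hp⟩
    · exact ⟨0, 0, fun y hy => hy.elim⟩
    · exact ⟨0, f p, fun y hy => by rw [le_antisymm (hP y hy p hp) (hP p hp y hy)]; ring⟩

def AffineOnGaps (C : Finset ℝ) (f : ℝ → ℝ) : Prop :=
  ∀ p q, (∀ c ∈ C, c ∉ Ioo p q) → ∃ a b : ℝ, ∀ y ∈ Icc p q, f y = a * y + b

lemma AffineOnGaps.piecewiseAffineWith {C : Finset ℝ} {f : ℝ → ℝ} (hf : AffineOnGaps C f) :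
    PiecewiseAffineWith f (C.card + 1) := by
  set c := C.orderEmbOfFin rfl
  refine ⟨C.card.succ_pos, c, c.monotone, fun j => ?_⟩
  obtain ⟨a, b, hab⟩ := exists_affine_of_forall_Icc (f := f)
    (P := {y | (∀ i : Fin C.card, (i : ℕ) < j → c i ≤ y) ∧
      ∀ i : Fin C.card, (j : ℕ) ≤ i → y ≤ c i})
    (fun p ⟨hp, _⟩ q ⟨_, hq⟩ => hf p q fun x hx hxpq => by
      obtain ⟨i, rfl⟩ : x ∈ Set.range c := by rw [Finset.range_orderEmbOfFin]; exact hx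
      rcases lt_or_ge (i : ℕ) j with hij | hij
      · exact (hp i hij).not_gt hxpq.1
      · exact (hq i hij).not_gt hxpq.2)
  exact ⟨a, b, fun y h₁ h₂ => hab y ⟨h₁, h₂⟩⟩

lemma AffineOnGaps.comp_neg {C : Finset ℝ} {f : ℝ → ℝ} (hf : AffineOnGaps C f) :
    AffineOnGaps (C.image Neg.neg) (fun x => f (-x)) := by
  intro p q hgap
  obtain ⟨a, b, hab⟩ := hf (-q) (-p) fun c hc hcI =>
    hgap (-c) (Finset.mem_image_of_mem _ hc) ⟨by linarith [hcI.2], by linarith [hcI.1]⟩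
  refine ⟨-a, b, fun y hy => ?_⟩
  simp only [hab (-y) ⟨neg_le_neg hy.2, neg_le_neg hy.1⟩]
  ring

lemma Monotone.exists_val_lt_iff_le {α : Type*} [LinearOrder α] {n : ℕ} {c : Fin n → α}
    (hc : Monotone c) (p : α) : ∃ j ≤ n, ∀ i : Fin n, (i : ℕ) < j ↔ c i ≤ p := by
  classical
  have hex : ∃ j, ∀ i : Fin n, j ≤ (i : ℕ) → p < c i :=
    ⟨n, fun i hi => absurd i.isLt (by omega)⟩
  refine ⟨Nat.find hex, Nat.find_min' hex fun i hi => absurd i.isLt (by omega),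
    fun i => ⟨fun hi => ?_, fun hi => ?_⟩⟩
  · by_contra! h
    exact Nat.find_min hex hi fun i' hi' => h.trans_le (hc (Fin.le_def.2 hi'))
  · by_contra! h
    exact (Nat.find_spec hex i h).not_ge hi

lemma PiecewiseAffineWith.exists_lines {f : ℝ → ℝ} {k : ℕ} (hf : PiecewiseAffineWith f k) :
    ∃ (C : Finset ℝ) (L : Finset (ℝ × ℝ)), C.card + 1 ≤ k ∧ L.card ≤ k ∧
      ∀ p q, (∀ c ∈ C, c ∉ Ioo p q) →
        ∃ ab ∈ L, ∀ y ∈ Icc p q, f y = ab.1 * y + ab.2 := by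
  classical
  obtain ⟨hk, c, hc, hpieces⟩ := hf
  choose a b hab using hpieces
  refine ⟨Finset.univ.image c, Finset.univ.image fun j => (a j, b j), ?_, ?_,
    fun p q hgap => ?_⟩
  · have := (Finset.card_image_le (s := Finset.univ) (f := c)).trans_eq (Finset.card_fin _)
    omega
  · exact Finset.card_image_le.trans_eq (Finset.card_fin _)
  obtain ⟨j, hjk, hj⟩ := hc.exists_val_lt_iff_le p
  refine ⟨(a ⟨j, by omega⟩, b ⟨j, by omega⟩),
    Finset.mem_image_of_mem _ (Finset.mem_univ _),
    fun y hy => hab _ y (fun i hi => ((hj i).1 hi).trans hy.1) fun i hi => ?_⟩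
  have hpc : p < c i := lt_of_not_ge fun h => (not_lt.2 hi) ((hj i).2 h)
  exact hy.2.trans (not_lt.1 fun hcq =>
    hgap _ (Finset.mem_image_of_mem c (Finset.mem_univ i)) ⟨hpc, hcq⟩)

lemma PiecewiseAffineWith.exists_affineOnGaps {f : ℝ → ℝ} {k : ℕ}
    (hf : PiecewiseAffineWith f k) : ∃ C : Finset ℝ, C.card + 1 ≤ k ∧ AffineOnGaps C f := by
  obtain ⟨C, L, hC, -, hCL⟩ := hf.exists_lines
  exact ⟨C, hC, fun p q hgap => let ⟨ab, _, h⟩ := hCL p q hgap; ⟨ab.1, ab.2, h⟩⟩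

lemma PiecewiseAffineWith.exists_eventually_lines {f : ℝ → ℝ} {k : ℕ}
    (hf : PiecewiseAffineWith f k) : ∃ L : Finset (ℝ × ℝ), L.card ≤ k ∧
      ∀ x, ∃ ab ∈ L, ∀ᶠ y in 𝓝[≤] x, f y = ab.1 * y + ab.2 := by
  obtain ⟨C, L, -, hL, hCL⟩ := hf.exists_lines
  refine ⟨L, hL, fun x => ?_⟩
  have : ∀ᶠ p in 𝓝[<] x, p < x ∧ ∀ c ∈ C, c ∉ Ioo p x := by
    refine (eventually_mem_nhdsWithin (s := Iio x)).and ((eventually_all_finset C).2 fun c _ => ?_)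
    rcases lt_or_ge c x with hcx | hxc
    · filter_upwards [Ioo_mem_nhdsLT hcx] with p hp hc using hp.1.not_gt hc.1
    · exact Eventually.of_forall fun p hc => hc.2.not_ge hxc
  obtain ⟨p, hpx, hgap⟩ := this.exists
  obtain ⟨ab, hab, h⟩ := hCL p x hgap
  exact ⟨ab, hab, eventually_of_mem (Icc_mem_nhdsLE hpx) h⟩

lemma PiecewiseAffineWith.neg {f : ℝ → ℝ} {k : ℕ} (hf : PiecewiseAffineWith f k) :
    PiecewiseAffineWith (fun x => -f x) k := by
  obtain ⟨hk, c, hc, hpieces⟩ := hf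
  refine ⟨hk, c, hc, fun j => ?_⟩
  obtain ⟨a, b, hab⟩ := hpieces j
  exact ⟨-a, -b, fun y h₁ h₂ => by simp only [hab y h₁ h₂]; ring⟩

lemma PiecewiseAffineWith.exists_comp_neg {f : ℝ → ℝ} {k : ℕ}
    (hf : PiecewiseAffineWith f k) :
    ∃ K ≤ k, PiecewiseAffineWith (fun x => f (-x)) K := by
  classical
  obtain ⟨C, hC, hCf⟩ := hf.exists_affineOnGaps
  exact ⟨_, by have := Finset.card_image_le (s := C) (f := Neg.neg); omega,
    hCf.comp_neg.piecewiseAffineWith⟩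

lemma line_le_of_convexOn {h : ℝ → ℝ} (hh : ConvexOn ℝ univ h) {a b p q : ℝ} (hpq : p < q)
    (heq : ∀ y ∈ Icc p q, h y = a * y + b) (x : ℝ) : a * x + b ≤ h x := by
  have hp := heq p (left_mem_Icc.2 hpq.le)
  have hq := heq q (right_mem_Icc.2 hpq.le)
  rcases lt_or_ge x p with hxp | hpx
  · have hslope := hh.slope_mono_adjacent (mem_univ x) (mem_univ q) hxp hpq
    rw [hp, hq, div_le_div_iff₀ (sub_pos.2 hxp) (sub_pos.2 hpq)] at hslope
    nlinarith
  rcases le_or_gt x q with hxq | hqx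
  · exact (heq x ⟨hpx, hxq⟩).ge
  · have hslope := hh.slope_mono_adjacent (mem_univ p) (mem_univ x) hpq hqx
    rw [hp, hq, div_le_div_iff₀ (sub_pos.2 hpq) (sub_pos.2 hqx)] at hslope
    nlinarith

lemma eq_sInf_or_eq_sSup_of_supporting_line {v : ℝ → ℝ} {a b x₀ : ℝ} (ha : a ≠ 0)
    (hv : ∀ x, a * x + b ≤ v x) (hx₀ : v x₀ = a * x₀ + b) :
    x₀ = sInf {x | v x ≤ v x₀} ∨ x₀ = sSup {x | v x ≤ v x₀} := by
  rcases ha.lt_or_gt with ha | ha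
  · refine Or.inl
      (IsLeast.csInf_eq (s := {x | v x ≤ v x₀}) ⟨le_refl (v x₀), fun x hx => ?_⟩).symm
    nlinarith [hv x, show v x ≤ v x₀ from hx]
  · refine Or.inr
      (IsGreatest.csSup_eq (s := {x | v x ≤ v x₀}) ⟨le_refl (v x₀), fun x hx => ?_⟩).symm
    nlinarith [hv x, show v x ≤ v x₀ from hx]

lemma mul_add_mem_uIcc {a b p q y : ℝ} (hy : y ∈ Icc p q) :
    a * y + b ∈ uIcc (a * p + b) (a * q + b) := by
  rcases le_total 0 a with ha | ha
  · exact mem_uIcc.2 (Or.inl ⟨by nlinarith [hy.1], by nlinarith [hy.2]⟩)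
  · exact mem_uIcc.2 (Or.inr ⟨by nlinarith [hy.2], by nlinarith [hy.1]⟩)

lemma AffineOnGaps.comp {Cφ Cv : Finset ℝ} {φ v : ℝ → ℝ} (hφ : AffineOnGaps Cφ φ)
    (hv : AffineOnGaps Cv v) (hconv : ConvexOn ℝ univ v) :
    AffineOnGaps (Cv ∪ Cφ.image (fun c => sInf {x | v x ≤ c}) ∪
      Cφ.image (fun c => sSup {x | v x ≤ c})) (fun x => φ (v x)) := by
  intro p q hgap
  rcases lt_or_ge q p with hqp | hpq
  · exact ⟨0, 0, fun y hy => absurd (hy.1.trans hy.2) hqp.not_ge⟩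
  obtain ⟨a, b, hab⟩ := hv p q fun c hc => hgap c (by simp [hc])
  have hvp := hab p (left_mem_Icc.2 hpq)
  have hvq := hab q (right_mem_Icc.2 hpq)
  -- a breakpoint of `φ` strictly between `v p` and `v q` would be hit at an interior point,
  -- and the convexity of `v` makes that point an endpoint of a sublevel set of `v`
  have hφgap : ∀ c ∈ Cφ, c ∉ uIoo (v p) (v q) := by
    intro c hc hcI
    rw [hvp, hvq] at hcI
    have hcont : ContinuousOn (fun x => a * x + b) (Icc p q) := by fun_prop
    obtain ⟨x₀, hx₀, hx₀c⟩ : ∃ x₀ ∈ Ioo p q, a * x₀ + b = c := by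
      rw [uIoo_eq_union] at hcI
      rcases hcI with h | h
      exacts [intermediate_value_Ioo hpq hcont h, intermediate_value_Ioo' hpq hcont h]
    have ha : a ≠ 0 := by
      rintro rfl
      simp at hcI
    have hvx₀ := hab x₀ (Ioo_subset_Icc_self hx₀)
    rcases eq_sInf_or_eq_sSup_of_supporting_line ha
        (line_le_of_convexOn hconv (hx₀.1.trans hx₀.2) hab) hvx₀ with h | h <;>
      rw [hvx₀, hx₀c] at h
    · exact hgap x₀ (Finset.mem_union_left _ (Finset.mem_union_right _
        (Finset.mem_image.2 ⟨c, hc, h.symm⟩))) hx₀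
    · exact hgap x₀ (Finset.mem_union_right _ (Finset.mem_image.2 ⟨c, hc, h.symm⟩)) hx₀
  obtain ⟨α, γ, hαγ⟩ := hφ (v p ⊓ v q) (v p ⊔ v q) hφgap
  refine ⟨α * a, α * b + γ, fun y hy => ?_⟩
  have hvy : v y ∈ uIcc (v p) (v q) := by rw [hab y hy, hvp, hvq]; exact mul_add_mem_uIcc hy
  show φ (v y) = _
  rw [hαγ (v y) hvy, hab y hy]
  ring

lemma PiecewiseAffineWith.exists_comp {φ v : ℝ → ℝ} {k m : ℕ}
    (hφ : PiecewiseAffineWith φ k) (hv : PiecewiseAffineWith v m) (hconv : ConvexOn ℝ univ v) :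
    ∃ K ≤ 2 * k + m, PiecewiseAffineWith (fun x => φ (v x)) K := by
  classical
  obtain ⟨Cφ, hCφ, hφ'⟩ := hφ.exists_affineOnGaps
  obtain ⟨Cv, hCv, hv'⟩ := hv.exists_affineOnGaps
  refine ⟨_, ?_, (hφ'.comp hv' hconv).piecewiseAffineWith⟩
  have h₁ := Finset.card_union_le (Cv ∪ Cφ.image fun c => sInf {x | v x ≤ c})
    (Cφ.image fun c => sSup {x | v x ≤ c})
  have h₂ := Finset.card_union_le Cv (Cφ.image fun c => sInf {x | v x ≤ c})
  have h₃ := Finset.card_image_le (s := Cφ) (f := fun c => sInf {x | v x ≤ c})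
  have h₄ := Finset.card_image_le (s := Cφ) (f := fun c => sSup {x | v x ≤ c})
  omega

lemma ConvexOn.exists_piecewiseAffineWith_of_eventually_lines {h : ℝ → ℝ}
    (hh : ConvexOn ℝ univ h) (L : Finset (ℝ × ℝ))
    (hL : ∀ x, ∃ ab ∈ L, ∀ᶠ y in 𝓝[≤] x, h y = ab.1 * y + ab.2) :
    ∃ K ≤ L.card, PiecewiseAffineWith h K := by
  classical
  set L' := L.filter fun ab => ∀ x, ab.1 * x + ab.2 ≤ h x
  have hL' : ∀ x, ∃ ab ∈ L', h x = ab.1 * x + ab.2 := by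
    intro x
    obtain ⟨ab, hab, hev⟩ := hL x
    obtain ⟨p, hpx, hp⟩ := mem_nhdsLE_iff_exists_Icc_subset.1 hev
    exact ⟨ab, Finset.mem_filter.2 ⟨hab, line_le_of_convexOn hh hpx fun y hy => hp hy⟩,
      hp (right_mem_Icc.2 hpx.le)⟩
  have hne : L'.Nonempty := let ⟨ab, hab, _⟩ := hL' 0; ⟨ab, hab⟩
  have heq : h = lineSup L' hne Prod.fst Prod.snd := funext fun x => le_antisymm
    (let ⟨_, hab, hx⟩ := hL' x; hx ▸ line_le_lineSup hab x)
    (lineSup_le fun _ hab => (Finset.mem_filter.1 hab).2 x)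
  exact ⟨_, Finset.card_image_le.trans (Finset.card_filter_le _ _),
    heq ▸ piecewiseAffineWith_lineSup _ _ _ _⟩

lemma eventually_le_or_eventually_ge_of_lines (a₁ b₁ a₂ b₂ x : ℝ) :
    (∀ᶠ y in 𝓝[≤] x, a₂ * y + b₂ ≤ a₁ * y + b₁) ∨
      ∀ᶠ y in 𝓝[≤] x, a₁ * y + b₁ ≤ a₂ * y + b₂ := by
  have hcont : Continuous fun y => a₁ * y + b₁ := by fun_prop
  have hcont' : Continuous fun y => a₂ * y + b₂ := by fun_prop
  rcases lt_trichotomy (a₁ * x + b₁) (a₂ * x + b₂) with hlt | heq | hgt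
  · exact Or.inr (nhdsWithin_le_nhds
      ((hcont.continuousAt.eventually_lt hcont'.continuousAt hlt).mono fun _ => le_of_lt))
  · rcases le_total a₁ a₂ with ha | ha
    · exact Or.inl (eventually_nhdsWithin_of_forall fun y (hy : y ≤ x) => by
        nlinarith [mul_nonneg (sub_nonneg.2 ha) (sub_nonneg.2 hy)])
    · exact Or.inr (eventually_nhdsWithin_of_forall fun y (hy : y ≤ x) => by
        nlinarith [mul_nonneg (sub_nonneg.2 ha) (sub_nonneg.2 hy)])
  · exact Or.inl (nhdsWithin_le_nhds
      ((hcont'.continuousAt.eventually_lt hcont.continuousAt hgt).mono fun _ => le_of_lt))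

lemma ConvexOn.exists_piecewiseAffineWith_of_eq_max {h ψ₁ ψ₂ : ℝ → ℝ} {K₁ K₂ : ℕ}
    (hh : ConvexOn ℝ univ h) (hmax : ∀ x, h x = max (ψ₁ x) (ψ₂ x))
    (h₁ : PiecewiseAffineWith ψ₁ K₁) (h₂ : PiecewiseAffineWith ψ₂ K₂) :
    ∃ K ≤ K₁ + K₂, PiecewiseAffineWith h K := by
  classical
  obtain ⟨L₁, hL₁, hψ₁⟩ := h₁.exists_eventually_lines
  obtain ⟨L₂, hL₂, hψ₂⟩ := h₂.exists_eventually_lines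
  have hL : ∀ x, ∃ ab ∈ L₁ ∪ L₂, ∀ᶠ y in 𝓝[≤] x, h y = ab.1 * y + ab.2 := by
    intro x
    obtain ⟨ab₁, hab₁, hev₁⟩ := hψ₁ x
    obtain ⟨ab₂, hab₂, hev₂⟩ := hψ₂ x
    rcases eventually_le_or_eventually_ge_of_lines ab₁.1 ab₁.2 ab₂.1 ab₂.2 x with hle | hle
    · refine ⟨ab₁, Finset.mem_union_left _ hab₁, ?_⟩
      filter_upwards [hev₁, hev₂, hle] with y h₁ h₂ h₁₂
      rw [hmax, h₁, h₂, max_eq_left h₁₂]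
    · refine ⟨ab₂, Finset.mem_union_right _ hab₂, ?_⟩
      filter_upwards [hev₁, hev₂, hle] with y h₁ h₂ h₁₂
      rw [hmax, h₁, h₂, max_eq_right h₁₂]
  obtain ⟨K, hK, hpw⟩ := hh.exists_piecewiseAffineWith_of_eventually_lines _ hL
  exact ⟨K, hK.trans ((Finset.card_union_le _ _).trans (add_le_add hL₁ hL₂)), hpw⟩

lemma piecewiseAffineWith_nPieces {f : ℝ → ℝ} {k : ℕ} (hf : PiecewiseAffineWith f k) :
    PiecewiseAffineWith f (nPieces f) :=
  Nat.sInf_mem (s := {k | PiecewiseAffineWith f k}) ⟨k, hf⟩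

lemma nPieces_le {f : ℝ → ℝ} {k : ℕ} (hf : PiecewiseAffineWith f k) : nPieces f ≤ k :=
  Nat.sInf_le hf

lemma exists_sup'_eq_lineSup (S : Finset (ℝ → ℝ)) (hS : S.Nonempty)
    (haff : ∀ f ∈ S, ∃ a b : ℝ, ∀ x, f x = a * x + b) :
    ∃ A B : (ℝ → ℝ) → ℝ, (fun x => S.sup' hS fun f => f x) = lineSup S hS A B := by
  choose! A B hAB using haff
  exact ⟨A, B, funext fun x => Finset.sup'_congr hS rfl fun f hf => hAB f hf x⟩

lemma exists_inf'_eq_neg_lineSup (S : Finset (ℝ → ℝ)) (hS : S.Nonempty)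
    (haff : ∀ f ∈ S, ∃ a b : ℝ, ∀ x, f x = a * x + b) :
    ∃ A B : (ℝ → ℝ) → ℝ,
      (fun x => S.inf' hS fun f => f x) = fun x => -lineSup S hS A B x := by
  choose! A B hAB using haff
  refine ⟨-A, -B, funext fun x => le_antisymm ?_ (Finset.le_inf' _ _ fun f hf => ?_)⟩
  · obtain ⟨f, hf, hfx⟩ := Finset.exists_mem_eq_inf' hS fun f => f x
    rw [hfx, le_neg]
    exact lineSup_le fun g hg => by
      have := Finset.inf'_le (fun f => f x) hg
      simp only [Pi.neg_apply, hAB g hg, hAB f hf] at this hfx ⊢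
      linarith
  · have := line_le_lineSup (hS := hS) (A := -A) (B := -B) hf x
    simp only [Pi.neg_apply, hAB f hf] at this ⊢
    linarith

lemma exists_comp_eq_mul_add {f g : ℝ → ℝ} (hf : ∃ a b : ℝ, ∀ x, f x = a * x + b)
    (hg : ∃ a b : ℝ, ∀ x, g x = a * x + b) : ∃ a b : ℝ, ∀ x, (f ∘ g) x = a * x + b := by
  obtain ⟨a, b, hab⟩ := hf
  obtain ⟨a', b', hab'⟩ := hg
  exact ⟨a * a', a * b' + b, fun x => by simp only [Function.comp, hab, hab']; ring⟩

lemma sup'_comp_eq_max {F G H : Finset (ℝ → ℝ)} (hF : F.Nonempty) (hG : G.Nonempty)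
    (hH : H.Nonempty) (hFAff : ∀ f ∈ F, ∃ a b : ℝ, ∀ x, f x = a * x + b)
    (hHmem : ∀ h : ℝ → ℝ, h ∈ H ↔ ∃ f ∈ F, ∃ g ∈ G, h = f ∘ g) (x : ℝ) :
    H.sup' hH (fun h => h x) = max (F.sup' hF fun f => f (G.sup' hG fun g => g x))
      (F.sup' hF fun f => f (G.inf' hG fun g => g x)) := by
  set u := G.sup' hG fun g => g x
  set l := G.inf' hG fun g => g x
  refine le_antisymm (Finset.sup'_le _ _ fun h hh => ?_) (max_le ?_ ?_)
  · obtain ⟨f, hf, g, hg, rfl⟩ := (hHmem h).1 hh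
    obtain ⟨a, b, hab⟩ := hFAff f hf
    have hl : l ≤ g x := Finset.inf'_le (fun g => g x) hg
    have hu : g x ≤ u := Finset.le_sup' (fun g => g x) hg
    calc f (g x) ≤ max (f u) (f l) := by
          simp only [hab]
          rcases le_total 0 a with ha | ha
          · exact le_max_of_le_left (by nlinarith)
          · exact le_max_of_le_right (by nlinarith)
      _ ≤ _ := max_le_max (Finset.le_sup' (fun f => f u) hf) (Finset.le_sup' (fun f => f l) hf)
  · obtain ⟨g, hg, hgx⟩ : ∃ g ∈ G, u = g x := Finset.exists_mem_eq_sup' hG fun g => g x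
    obtain ⟨f, hf, hfx⟩ := Finset.exists_mem_eq_sup' hF fun f => f (g x)
    rw [hgx, hfx]
    exact Finset.le_sup' (fun h => h x) ((hHmem _).2 ⟨f, hf, g, hg, rfl⟩)
  · obtain ⟨g, hg, hgx⟩ : ∃ g ∈ G, l = g x := Finset.exists_mem_eq_inf' hG fun g => g x
    obtain ⟨f, hf, hfx⟩ := Finset.exists_mem_eq_sup' hF fun f => f (g x)
    rw [hgx, hfx]
    exact Finset.le_sup' (fun h => h x) ((hHmem _).2 ⟨f, hf, g, hg, rfl⟩)

/-- if `F`, `G` are nonempty finite sets of affine functions and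
`H = {f ∘ g | f ∈ F, g ∈ G}`, then the upper envelope `H_↑` is piecewise
linear with `p(H_↑) ≤ 4 p(F_↑) + 2 p(G_↓) + 2 p(G_↑)`. -/
theorem nPieces_upper_envelope_comp (F G H : Finset (ℝ → ℝ))
    (hF : F.Nonempty) (hG : G.Nonempty) (hH : H.Nonempty)
    (hFAff : ∀ f ∈ F, ∃ a b : ℝ, ∀ x : ℝ, f x = a * x + b)
    (hGAff : ∀ g ∈ G, ∃ a b : ℝ, ∀ x : ℝ, g x = a * x + b)
    (hHmem : ∀ h : ℝ → ℝ, h ∈ H ↔ ∃ f ∈ F, ∃ g ∈ G, h = f ∘ g) :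
    (∃ k : ℕ, PiecewiseAffineWith (fun x : ℝ => H.sup' hH (fun h => h x)) k) ∧
    nPieces (fun x : ℝ => H.sup' hH (fun h => h x)) ≤
      4 * nPieces (fun x : ℝ => F.sup' hF (fun f => f x)) +
      2 * nPieces (fun x : ℝ => G.inf' hG (fun g => g x)) +
      2 * nPieces (fun x : ℝ => G.sup' hG (fun g => g x)) := by
  have hHAff : ∀ h ∈ H, ∃ a b : ℝ, ∀ x, h x = a * x + b := fun h hh => by
    obtain ⟨f, hf, g, hg, rfl⟩ := (hHmem h).1 hh
    exact exists_comp_eq_mul_add (hFAff f hf) (hGAff g hg)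
  obtain ⟨AF, BF, hφ⟩ := exists_sup'_eq_lineSup F hF hFAff
  obtain ⟨AG, BG, hu⟩ := exists_sup'_eq_lineSup G hG hGAff
  obtain ⟨AG', BG', hl⟩ := exists_inf'_eq_neg_lineSup G hG hGAff
  obtain ⟨AH, BH, hh⟩ := exists_sup'_eq_lineSup H hH hHAff
  set φ := fun x => F.sup' hF fun f => f x
  set u := fun x => G.sup' hG fun g => g x
  set l := fun x => G.inf' hG fun g => g x
  have hk₁ := piecewiseAffineWith_nPieces (hφ ▸ piecewiseAffineWith_lineSup F hF AF BF)
  have hk₂ := piecewiseAffineWith_nPieces (hl ▸ (piecewiseAffineWith_lineSup G hG AG' BG').neg)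
  have hk₃ := piecewiseAffineWith_nPieces (hu ▸ piecewiseAffineWith_lineSup G hG AG BG)
  have hconv_l : ConvexOn ℝ univ fun x => -l x := by
    simpa only [hl, neg_neg] using convexOn_lineSup G hG AG' BG'
  obtain ⟨K₁, hK₁, hφu⟩ := hk₁.exists_comp hk₃ (hu ▸ convexOn_lineSup G hG AG BG)
  obtain ⟨K', hK', hφneg⟩ := hk₁.exists_comp_neg
  obtain ⟨K₂, hK₂, hφl⟩ := hφneg.exists_comp hk₂.neg hconv_l
  simp only [neg_neg] at hφl
  have hconv_h : ConvexOn ℝ univ fun x => H.sup' hH fun h => h x :=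
    hh ▸ convexOn_lineSup H hH AH BH
  obtain ⟨K, hK, hpw⟩ := hconv_h.exists_piecewiseAffineWith_of_eq_max
    (sup'_comp_eq_max hF hG hH hFAff hHmem) hφu hφl
  exact ⟨⟨K, hpw⟩, (nPieces_le hpw).trans (by omega)⟩
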